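/- Suppose φ ∈ L²(G) with Fourier transform φ̂, m₀ : G* → ℂ measurable with |m₀| ≤ 1 a.e., φ̂(Bω) = m₀(ω)φ̂(ω) a.e., and lim_{n→∞} |φ̂(B^{-n}ω)| = 1 for a.e. ω. Then |φ̂(ω)| = ∏_{j=1}^{∞} |m₀(B^{-j}ω)| for a.e. ω, i.e., |φ̂| coincides with the canonical infinite-product solution φ̂_{|m₀|}. -/

import Mathlib

/-! Telescoping the refinement equation `φ̂(ω) = m₀(B⁻¹ω) φ̂(B⁻¹ω)` along the backward orbit of `ω`
gives `|φ̂(ω)| = (∏_{j=1}^n |m₀(B^{-j}ω)|) |φ̂(B^{-n}ω)|` for every `n`; the last factor tends to `1`,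
so the partial products tend to `|φ̂(ω)|`. Quasi-invariance of `μ` under `B⁻¹` is what makes the
refinement equation hold simultaneously at all the points `B^{-j}ω` for a.e. `ω`. -/

open MeasureTheory Filter

theorem Equiv.prod_mul_apply_symm_iterate_eq {α M : Type*} [CommMonoid M] (B : α ≃ α)
    (f m : α → M) (ω : α)
    (h : ∀ j, f (B.symm^[j] ω) = m (B.symm^[j + 1] ω) * f (B.symm^[j + 1] ω)) (n : ℕ) :
    (∏ j ∈ Finset.Icc 1 n, m (B.symm^[j] ω)) * f (B.symm^[n] ω) = f ω := by
  induction n with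
  | zero => simp
  | succ n ih =>
    rw [Finset.prod_Icc_succ_top (by omega), mul_assoc, ← h n, ih]

theorem MeasureTheory.Measure.QuasiMeasurePreserving.ae_forall_symm_iterate {α M : Type*} [MeasurableSpace α]
    [Mul M] {μ : Measure α} {B : α ≃ α} (hBinv : Measure.QuasiMeasurePreserving B.symm μ μ)
    {f m : α → M} (h : ∀ᵐ ω ∂μ, f (B ω) = m ω * f ω) :
    ∀ᵐ ω ∂μ, ∀ j, f (B.symm^[j] ω) = m (B.symm^[j + 1] ω) * f (B.symm^[j + 1] ω) := by
  refine ae_all_iff.2 fun j => ?_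
  filter_upwards [(hBinv.iterate (j + 1)).ae h] with ω hω
  simpa only [Function.iterate_succ_apply', B.apply_symm_apply] using hω

theorem Filter.Tendsto.of_mul_eq_const {ι G₀ : Type*} [GroupWithZero G₀] [TopologicalSpace G₀]
    [T1Space G₀] [ContinuousInv₀ G₀] [ContinuousMul G₀] {l : Filter ι} {p a : ι → G₀} {c : G₀}
    (ha : Tendsto a l (nhds 1)) (hpa : ∀ i, p i * a i = c) : Tendsto p l (nhds c) := by
  have hc : Tendsto (fun i => c * (a i)⁻¹) l (nhds c) := by
    simpa using tendsto_const_nhds.mul (ha.inv₀ one_ne_zero)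
  refine hc.congr' ?_
  filter_upwards [ha.eventually_ne one_ne_zero] with i hi
  rw [← hpa i, mul_inv_cancel_right₀ hi]

theorem modulus_eq_infinite_product_general
    {G : Type*} [MeasurableSpace G] (μ : Measure G)
    (B : G ≃ G)
    (hBinv : Measure.QuasiMeasurePreserving (⇑B.symm) μ μ)
    (φhat : G → ℂ)
    (m₀ : G → ℂ)
    (hrefine : ∀ᵐ ω ∂μ, φhat (B ω) = m₀ ω * φhat ω)
    (hlim : ∀ᵐ ω ∂μ, Tendsto (fun n : ℕ => ‖φhat ((⇑B.symm)^[n] ω)‖) atTop (nhds 1)) :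
    ∀ᵐ ω ∂μ, Tendsto (fun n : ℕ => ∏ j ∈ Finset.Icc 1 n, ‖m₀ ((⇑B.symm)^[j] ω)‖)
      atTop (nhds ‖φhat ω‖) := by
  filter_upwards [hBinv.ae_forall_symm_iterate hrefine, hlim] with ω hω hlimω
  refine hlimω.of_mul_eq_const fun n => ?_
  simpa only [norm_mul, norm_prod] using congrArg norm (B.prod_mul_apply_symm_iterate_eq φhat m₀ ω hω n)

/-- If `φ̂ ∈ L²`, `|m₀| ≤ 1` a.e., `φ̂(Bω) = m₀(ω)φ̂(ω)` a.e., and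
`|φ̂(B^{-n}ω)| → 1` a.e., then `|φ̂(ω)| = ∏_{j=1}^∞ |m₀(B^{-j}ω)|` a.e., i.e. `|φ̂|`
coincides with the canonical infinite-product solution `φ̂_{|m₀|}`. -/
theorem modulus_eq_infinite_product
    {G : Type*} [MeasurableSpace G] (μ : Measure G)
    (B : G ≃ G) (hBmeas : Measurable B) (hBinvmeas : Measurable B.symm)
    (hB : Measure.QuasiMeasurePreserving (⇑B) μ μ)
    (hBinv : Measure.QuasiMeasurePreserving (⇑B.symm) μ μ)
    (φhat : G → ℂ) (hφL2 : MemLp φhat 2 μ)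
    (m₀ : G → ℂ) (hm₀meas : Measurable m₀)
    (hm₀bd : ∀ᵐ ω ∂μ, ‖m₀ ω‖ ≤ 1)
    (hrefine : ∀ᵐ ω ∂μ, φhat (B ω) = m₀ ω * φhat ω)
    (hlim : ∀ᵐ ω ∂μ, Tendsto (fun n : ℕ => ‖φhat ((⇑B.symm)^[n] ω)‖) atTop (nhds 1)) :
    ∀ᵐ ω ∂μ, Tendsto (fun n : ℕ => ∏ j ∈ Finset.Icc 1 n, ‖m₀ ((⇑B.symm)^[j] ω)‖)
      atTop (nhds ‖φhat ω‖) :=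
  modulus_eq_infinite_product_general μ B hBinv φhat m₀ hrefine hlim
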